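/- arXiv:1802.04324 — 2 statements merged into one kernel-verified Lean document; each statement's English description precedes it below -/
import Mathlib

section
/- Let R be an alternative ring containing a nontrivial idempotent e₁ satisfying conditions (i) and (ii), and let D : R → R be a Lie triple derivable map. Then for any a₁₂ ∈ R₁₂ and b₂₁ ∈ R₂₁, one has D(a₁₂ + b₂₁) = D(a₁₂) + D(b₂₁). -/
/-- The Lie bracket (commutator) in a not-necessarily-associative ring. -/
def lieBr {R : Type*} [NonUnitalNonAssocRing R] (x y : R) : R := x * y - y * x

/-- `R` is an alternative ring: `(x*x)*y = x*(x*y)` and `(y*x)*x = y*(x*x)`. -/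
def IsAlternative (R : Type*) [NonUnitalNonAssocRing R] : Prop :=
  (∀ x y : R, x * x * y = x * (x * y)) ∧ (∀ x y : R, y * x * x = y * (x * x))

/-- The centre of a not-necessarily-associative ring: elements `r` whose associators
`(r,x,y)`, `(x,r,y)`, `(x,y,r)` all vanish and which commute with everything. -/
def ringCenter (R : Type*) [NonUnitalNonAssocRing R] : Set R :=
  {r | (∀ x y : R, r * x * y = r * (x * y)) ∧ (∀ x y : R, x * r * y = x * (r * y)) ∧
       (∀ x y : R, x * y * r = x * (y * r)) ∧ (∀ x : R, r * x = x * r)}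

/-- `e` is a nontrivial idempotent: idempotent, nonzero and not a multiplicative identity. -/
def IsNontrivialIdempotent {R : Type*} [NonUnitalNonAssocRing R] (e : R) : Prop :=
  e * e = e ∧ e ≠ 0 ∧ ¬ (∀ x : R, e * x = x ∧ x * e = x)

/-- Peirce component `R₁₁` relative to the idempotent `e`. -/
def peirce11 {R : Type*} [NonUnitalNonAssocRing R] (e : R) : Set R :=
  {x | e * x = x ∧ x * e = x}

/-- Peirce component `R₁₂` relative to the idempotent `e`. -/
def peirce12 {R : Type*} [NonUnitalNonAssocRing R] (e : R) : Set R :=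
  {x | e * x = x ∧ x * e = 0}

/-- Peirce component `R₂₁` relative to the idempotent `e`. -/
def peirce21 {R : Type*} [NonUnitalNonAssocRing R] (e : R) : Set R :=
  {x | e * x = 0 ∧ x * e = x}

/-- Peirce component `R₂₂` relative to the idempotent `e`. -/
def peirce22 {R : Type*} [NonUnitalNonAssocRing R] (e : R) : Set R :=
  {x | e * x = 0 ∧ x * e = 0}

/-- Condition (i): if `a₁₁ + a₂₂` commutes with every element of `R₁₂`, it is central. -/
def CondI {R : Type*} [NonUnitalNonAssocRing R] (e : R) : Prop :=
  ∀ a b : R, a ∈ peirce11 e → b ∈ peirce22 e →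
    (∀ m ∈ peirce12 e, lieBr (a + b) m = 0) → a + b ∈ ringCenter R

/-- Condition (ii): if `a₁₁ + a₂₂` commutes with every element of `R₂₁`, it is central. -/
def CondII {R : Type*} [NonUnitalNonAssocRing R] (e : R) : Prop :=
  ∀ a b : R, a ∈ peirce11 e → b ∈ peirce22 e →
    (∀ m ∈ peirce21 e, lieBr (a + b) m = 0) → a + b ∈ ringCenter R

/-- A map `φ` is Lie multiplicative if `φ [x,y] = [φ x, φ y]`. -/
def IsLieMultiplicative {R R' : Type*} [NonUnitalNonAssocRing R] [NonUnitalNonAssocRing R']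
    (φ : R → R') : Prop :=
  ∀ x y : R, φ (lieBr x y) = lieBr (φ x) (φ y)

/-- A map `D` is Lie triple derivable if
`D [[x,y],z] = [[D x,y],z] + [[x,D y],z] + [[x,y],D z]`. -/
def IsLieTripleDerivable {R : Type*} [NonUnitalNonAssocRing R] (D : R → R) : Prop :=
  ∀ x y z : R, D (lieBr (lieBr x y) z) =
    lieBr (lieBr (D x) y) z + lieBr (lieBr x (D y)) z + lieBr (lieBr x y) (D z)

/-- A map `D` is Lie derivable if `D [x,y] = [D x, y] + [x, D y]`. -/
def IsLieDerivable {R : Type*} [NonUnitalNonAssocRing R] (D : R → R) : Prop :=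
  ∀ x y : R, D (lieBr x y) = lieBr (D x) y + lieBr x (D y)

/-- `I` is a two-sided ideal (as a set) of the not-necessarily-associative ring `R`. -/
def IsTwoSidedIdealSet {R : Type*} [NonUnitalNonAssocRing R] (I : Set R) : Prop :=
  (0 : R) ∈ I ∧ (∀ a b : R, a ∈ I → b ∈ I → a + b ∈ I) ∧ (∀ a : R, a ∈ I → -a ∈ I) ∧
  (∀ r a : R, a ∈ I → r * a ∈ I ∧ a * r ∈ I)

/-- `R` is prime: for any two nonzero two-sided ideals `A`, `B`, some product `a*b` with
`a ∈ A`, `b ∈ B` is nonzero (i.e. `A·B ≠ 0`). -/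
def IsPrimeRing (R : Type*) [NonUnitalNonAssocRing R] : Prop :=
  ∀ A B : Set R, IsTwoSidedIdealSet A → IsTwoSidedIdealSet B → A ≠ {0} → B ≠ {0} →
    ∃ a ∈ A, ∃ b ∈ B, a * b ≠ 0

/-- `R` is 3-torsion free: `3x = 0` implies `x = 0`. -/
def ThreeTorsionFree (R : Type*) [NonUnitalNonAssocRing R] : Prop :=
  ∀ x : R, x + x + x = 0 → x = 0

section Aux
variable {R : Type*} [NonUnitalNonAssocRing R]

private lemma lc {x y c : R} (key : x - y = c) (hc : c = 0) : x = y :=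
  sub_eq_zero.mp (key.trans hc)

private lemma lieBr_add_left' (x y z : R) : lieBr (x + y) z = lieBr x z + lieBr y z := by
  simp only [lieBr, add_mul, mul_add]; abel

private lemma lieBr_sub_left' (x y z : R) : lieBr (x - y) z = lieBr x z - lieBr y z := by
  simp only [lieBr, sub_mul, mul_sub]; abel

private lemma lieBr_zero_left' (x : R) : lieBr 0 x = 0 := by simp [lieBr]

private lemma skew12 (hR : IsAlternative R) (x y z : R) :
    x*y*z - x*(y*z) = -(y*x*z - y*(x*z)) := by
  apply lc (c := ((x+y)*(x+y)*z - (x+y)*((x+y)*z)) - (x*x*z - x*(x*z)) - (y*y*z - y*(y*z)))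
  · simp only [add_mul, mul_add]; abel
  · rw [hR.1 (x+y) z, hR.1 x z, hR.1 y z]; abel

private lemma skew23 (hR : IsAlternative R) (x y z : R) :
    x*y*z - x*(y*z) = -(x*z*y - x*(z*y)) := by
  apply lc (c := (x*(y+z)*(y+z) - x*((y+z)*(y+z))) - (x*y*y - x*(y*y)) - (x*z*z - x*(z*z)))
  · simp only [add_mul, mul_add]; abel
  · rw [hR.2 (y+z) x, hR.2 y x, hR.2 z x]; abel

private lemma swap13 (hR : IsAlternative R) (x y z : R) :
    x*y*z - x*(y*z) = -(z*y*x - z*(y*x)) := by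
  rw [skew12 hR x y z, skew23 hR y x z, skew12 hR y z x, neg_neg]

private lemma PL1 (hR : IsAlternative R) {e a n : R} (ha1 : e*a = a) (ha2 : a*e = 0)
    (hn1 : e*n = 0) : e*(a*n) = a*n := by
  have h := skew12 hR e a n
  rw [ha1, ha2, hn1, zero_mul, mul_zero] at h
  have h2 : a*n - e*(a*n) = 0 := by simpa using h
  exact (sub_eq_zero.mp h2).symm

private lemma PL2 (hR : IsAlternative R) {e a n : R} (ha2 : a*e = 0)
    (hn1 : e*n = 0) (hn2 : n*e = n) : a*n*e = a*n := by
  have h := skew23 hR a e n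
  rw [ha2, hn1, hn2, zero_mul, mul_zero] at h
  have h2 : a*n - a*n*e = 0 := by simpa using h.symm
  exact ((sub_eq_zero.mp h2)).symm

private lemma PL3 (hR : IsAlternative R) {e a n : R} (ha1 : e*a = a)
    (hn1 : e*n = 0) (hn2 : n*e = n) : e*(n*a) = 0 := by
  have h := skew12 hR e n a
  rw [ha1, hn1, hn2, zero_mul] at h
  simpa using h.symm

private lemma PL4 (hR : IsAlternative R) {e a n : R} (ha1 : e*a = a) (ha2 : a*e = 0)
    (hn2 : n*e = n) : n*a*e = 0 := by
  have h := skew23 hR n e a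
  rw [ha1, ha2, hn2, mul_zero] at h
  simpa using h.symm

private lemma PL5 (hR : IsAlternative R) {e x n : R} (hx1 : e*x = x) (hx2 : x*e = x)
    (hn1 : e*n = 0) (hn2 : n*e = n) : x*n = 0 := by
  have h := swap13 hR x e n
  rw [hx1, hx2, hn1, hn2, mul_zero] at h
  simpa using h

private lemma PL6 (hR : IsAlternative R) {e x n : R} (hx1 : e*x = x)
    (hn1 : e*n = 0) (hn2 : n*e = n) : e*(n*x) = 0 := by
  have h := skew12 hR e n x
  rw [hx1, hn1, hn2, zero_mul] at h
  simpa using h.symm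

private lemma PL7 (hR : IsAlternative R) {e x n : R} (hx1 : e*x = x) (hx2 : x*e = x)
    (hn2 : n*e = n) : n*x*e = n*x := by
  have h := skew23 hR n e x
  rw [hx1, hx2, hn2] at h
  have h2 : n*x - n*x*e = 0 := by simpa using h.symm
  exact (sub_eq_zero.mp h2).symm

private lemma PL8 (hR : IsAlternative R) {e w n : R} (hw1 : e*w = 0) (hw2 : w*e = 0)
    (hn1 : e*n = 0) (hn2 : n*e = n) : n*w = 0 := by
  have h := swap13 hR w e n
  rw [hw1, hw2, hn1, hn2, zero_mul, mul_zero] at h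
  simpa using h.symm

private lemma PL9 (hR : IsAlternative R) {e w n : R} (hw1 : e*w = 0) (hw2 : w*e = 0)
    (hn1 : e*n = 0) : e*(w*n) = 0 := by
  have h := skew12 hR e w n
  rw [hw1, hw2, hn1, zero_mul, mul_zero] at h
  simpa using h

private lemma PL10 (hR : IsAlternative R) {e w n : R} (hw2 : w*e = 0)
    (hn1 : e*n = 0) (hn2 : n*e = n) : w*n*e = w*n := by
  have h := skew23 hR w e n
  rw [hw2, hn1, hn2, zero_mul, mul_zero] at h
  have h2 : w*n - w*n*e = 0 := by simpa using h.symm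
  exact (sub_eq_zero.mp h2).symm

end Aux

theorem lieTripleDer_add_12_21
    {R : Type*} [NonUnitalNonAssocRing R] (hR : IsAlternative R)
    (e : R) (he : IsNontrivialIdempotent e) (hi : CondI e) (hii : CondII e)
    (D : R → R) (hD : IsLieTripleDerivable D) :
    ∀ a b : R, a ∈ peirce12 e → b ∈ peirce21 e → D (a + b) = D a + D b := by
  intro a b ha hb
  obtain ⟨ha1, ha2⟩ := ha
  obtain ⟨hb1, hb2⟩ := hb
  have he1 : e * e = e := he.1
  have hD0 : D 0 = 0 := by simpa [lieBr] using hD 0 0 0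
  -- products of a and b
  have hab_l : e*(a*b) = a*b := PL1 hR ha1 ha2 hb1
  have hab_r : a*b*e = a*b := PL2 hR ha2 hb1 hb2
  have hba_l : e*(b*a) = 0 := PL3 hR ha1 hb1 hb2
  have hba_r : b*a*e = 0 := PL4 hR ha1 ha2 hb2
  -- master lemma
  have master : ∀ P Q x y : R, lieBr (lieBr (D (P + Q) - D P - D Q) x) y
      = D (lieBr (lieBr (P+Q) x) y) - D (lieBr (lieBr P x) y) - D (lieBr (lieBr Q x) y) := by
    intro P Q x y
    rw [hD (P+Q) x y, hD P x y, hD Q x y]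
    simp only [lieBr_sub_left', lieBr_add_left']
    abel
  obtain ⟨S, hS⟩ : ∃ S, S = D (a + -e) - D a - D (-e) := ⟨_, rfl⟩
  -- (1a) [[S,e],e] = 0
  have B1 : lieBr (lieBr (a + -e) e) e = a := by
    simp only [lieBr, mul_add, add_mul, mul_sub, sub_mul, mul_neg, neg_mul, neg_neg,
      mul_zero, zero_mul, he1, ha1, ha2]
    abel
  have B2 : lieBr (lieBr a e) e = a := by
    simp only [lieBr, mul_sub, sub_mul, mul_zero, zero_mul, he1, ha1, ha2]
    abel
  have B3 : lieBr (lieBr (-e) e) e = 0 := by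
    simp only [lieBr, mul_neg, neg_mul, mul_sub, sub_mul, he1]
    abel
  have hSe : lieBr (lieBr S e) e = 0 := by
    have m := master a (-e) e e
    rw [B1, B2, B3, hD0, ← hS] at m
    simpa using m
  -- (1c) eS = Se = eSe
  have f1 : S*e*e = S*e := by rw [hR.2 e S, he1]
  have f2 : e*(e*S) = e*S := by rw [← hR.1 e S, he1]
  have f3 : e*S*e = e*(S*e) := by
    have h := skew23 hR e e S
    rw [he1, f2] at h
    have h2 : e*(S*e) - e*S*e = 0 := by simpa using h.symm
    exact (sub_eq_zero.mp h2).symm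
  have f4 : e*(e*(S*e)) = e*(S*e) := by rw [← hR.1 e (S*e), he1]
  have f5 : e*(S*e)*e = e*(S*e) := by
    rw [← f3]
    rw [show e*S*e*e = e*S*(e*e) from hR.2 e (e*S), he1]
  have hexp : S*e + e*S - (e*(S*e) + e*(S*e)) = 0 := by
    have h := hSe
    simp only [lieBr, sub_mul, mul_sub] at h
    rw [f1, f2, f3] at h
    exact lc (by abel) h
  have h_eS : e*S = e*(S*e) := by
    have h := congrArg (fun t => e * t) hexp
    simp only [mul_add, mul_sub, mul_zero] at h
    rw [f2, f4] at h
    exact lc (by abel) h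
  have h_Se : S*e = e*(S*e) := by
    have h := congrArg (fun t => t * e) hexp
    simp only [add_mul, sub_mul, zero_mul] at h
    rw [f1, f3, f5] at h
    exact lc (by abel) h
  -- Peirce components of S
  have hs1_l : e*(e*(S*e)) = e*(S*e) := f4
  have hs1_r : e*(S*e)*e = e*(S*e) := f5
  have hs2_l : e*(S - e*(S*e)) = 0 := by rw [mul_sub, h_eS, f4, sub_self]
  have hs2_r : (S - e*(S*e))*e = 0 := by
    rw [sub_mul, f5]
    exact sub_eq_zero.mpr h_Se
  have hs12 : e*(S*e) + (S - e*(S*e)) = S := by abel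
  -- (1b,d) S commutes with R21
  have hcomm : ∀ n ∈ peirce21 e, lieBr (e*(S*e) + (S - e*(S*e))) n = 0 := by
    rintro n ⟨hn1, hn2⟩
    have q1 : e*(S*e)*n = 0 := PL5 hR hs1_l hs1_r hn1 hn2
    have q2 : e*(n*(e*(S*e))) = 0 := PL6 hR hs1_l hn1 hn2
    have q3 : n*(e*(S*e))*e = n*(e*(S*e)) := PL7 hR hs1_l hs1_r hn2
    have q4 : n*(S - e*(S*e)) = 0 := PL8 hR hs2_l hs2_r hn1 hn2
    have q5 : e*((S - e*(S*e))*n) = 0 := PL9 hR hs2_l hs2_r hn1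
    have q6 : (S - e*(S*e))*n*e = (S - e*(S*e))*n := PL10 hR hs2_r hn1 hn2
    have p1 : e*(a*n) = a*n := PL1 hR ha1 ha2 hn1
    have p2 : a*n*e = a*n := PL2 hR ha2 hn1 hn2
    have p3 : e*(n*a) = 0 := PL3 hR ha1 hn1 hn2
    have p4 : n*a*e = 0 := PL4 hR ha1 ha2 hn2
    have B4 : lieBr (lieBr (a + -e) n) e = n := by
      simp only [lieBr, mul_add, add_mul, mul_sub, sub_mul, mul_neg, neg_mul, neg_neg,
        mul_zero, zero_mul, he1, ha1, ha2, hn1, hn2, p1, p2, p3, p4]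
      abel
    have B5 : lieBr (lieBr a n) e = 0 := by
      simp only [lieBr, mul_sub, sub_mul, mul_zero, zero_mul, hn1, hn2, p1, p2, p3, p4]
      abel
    have B6 : lieBr (lieBr (-e) n) e = n := by
      simp only [lieBr, mul_neg, neg_mul, mul_sub, sub_mul, neg_neg, mul_zero, zero_mul,
        he1, hn1, hn2]
      abel
    have m := master a (-e) n e
    rw [B4, B5, B6, hD0, ← hS] at m
    have m0 : lieBr (lieBr S n) e = 0 := by simpa using m
    -- lieBr S n lies in R21 and equals its own bracket with e
    have hSn : lieBr S n = (S - e*(S*e))*n - n*(e*(S*e)) := by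
      have h1 : (S - e*(S*e))*n = S*n := by rw [sub_mul, q1, sub_zero]
      have h2 : n*(e*(S*e) + (S - e*(S*e))) = n*(e*(S*e)) := by rw [mul_add, q4, add_zero]
      rw [hs12] at h2
      show S*n - n*S = (S - e*(S*e))*n - n*(e*(S*e))
      rw [h1, h2]
    have hfix : lieBr (lieBr S n) e = lieBr S n := by
      rw [hSn]
      have c1 : ((S - e*(S*e))*n - n*(e*(S*e)))*e = (S - e*(S*e))*n - n*(e*(S*e)) := by
        rw [sub_mul, q6, q3]
      have c2 : e*((S - e*(S*e))*n - n*(e*(S*e))) = 0 := by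
        rw [mul_sub, q5, q2, sub_zero]
      show _ * e - e * _ = _
      rw [c1, c2, sub_zero]
    rw [hs12, ← hfix, m0]
  have hZ := hii (e*(S*e)) (S - e*(S*e)) ⟨hs1_l, hs1_r⟩ ⟨hs2_l, hs2_r⟩ hcomm
  have Scomm : ∀ x : R, S*x = x*S := by
    intro x
    have h := hZ.2.2.2 x
    rwa [hs12] at h
  -- Step 2 : D(-a + -b) = D(-a) + D(-b)
  have B7 : lieBr (lieBr (a + -e) (e+b)) (-e) = -a + -b := by
    simp only [lieBr, mul_add, add_mul, mul_sub, sub_mul, mul_neg, neg_mul, neg_neg,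
      mul_zero, zero_mul, he1, ha1, ha2, hb1, hb2, hab_l, hab_r, hba_l, hba_r]
    abel
  have B8 : lieBr (lieBr a (e+b)) (-e) = -a := by
    simp only [lieBr, mul_add, add_mul, mul_sub, sub_mul, mul_neg, neg_mul, neg_neg,
      mul_zero, zero_mul, he1, ha1, ha2, hb1, hb2, hab_l, hab_r, hba_l, hba_r]
    abel
  have B9 : lieBr (lieBr (-e) (e+b)) (-e) = -b := by
    simp only [lieBr, mul_add, add_mul, mul_sub, sub_mul, mul_neg, neg_mul, neg_neg,
      mul_zero, zero_mul, he1, hb1, hb2]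
    abel
  have L2 : lieBr (lieBr S (e+b)) (-e) = 0 := by
    have h0 : lieBr S (e+b) = 0 := by
      show S*(e+b) - (e+b)*S = 0
      rw [Scomm (e+b), sub_self]
    rw [h0, lieBr_zero_left']
  have m2 := master a (-e) (e+b) (-e)
  rw [B7, B8, B9, ← hS, L2] at m2
  have hStep2 : D (-a + -b) = D (-a) + D (-b) := by
    exact lc (by abel) m2.symm
  -- Step 3 : conclude
  have m3 := master (-a) (-b) e (-e)
  have hz : D (-a + -b) - D (-a) - D (-b) = 0 := by rw [hStep2]; abel
  rw [hz, lieBr_zero_left', lieBr_zero_left'] at m3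
  have B10 : lieBr (lieBr (-a + -b) e) (-e) = a + b := by
    simp only [lieBr, mul_add, add_mul, mul_sub, sub_mul, mul_neg, neg_mul, neg_neg,
      mul_zero, zero_mul, he1, ha1, ha2, hb1, hb2]
    abel
  have B11 : lieBr (lieBr (-a) e) (-e) = a := by
    simp only [lieBr, mul_neg, neg_mul, mul_sub, sub_mul, neg_neg, mul_zero, zero_mul,
      he1, ha1, ha2]
    abel
  have B12 : lieBr (lieBr (-b) e) (-e) = b := by
    simp only [lieBr, mul_neg, neg_mul, mul_sub, sub_mul, neg_neg, mul_zero, zero_mul,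
      he1, hb1, hb2]
    abel
  rw [B10, B11, B12] at m3
  exact lc (by abel) m3.symm
end

section
/- Let R be an alternative ring containing a nontrivial idempotent e₁ satisfying conditions (i) and (ii), and let D : R → R be a Lie triple derivable map. Then for any a₁₁ ∈ R₁₁, b₁₂ ∈ R₁₂, c₂₁ ∈ R₂₁ and d₂₂ ∈ R₂₂, there exists z ∈ Z(R) such that D(a₁₁ + b₁₂ + c₂₁ + d₂₂) = D(a₁₁) + D(b₁₂) + D(c₂₁) + D(d₂₂) + z. -/
namespace LTDaux

variable {R : Type*} [NonUnitalNonAssocRing R]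

theorem br_add_left (x y z : R) : lieBr (x + y) z = lieBr x z + lieBr y z := by
  simp only [lieBr, add_mul, mul_add]; abel

theorem br_add_right (x y z : R) : lieBr x (y + z) = lieBr x y + lieBr x z := by
  simp only [lieBr, add_mul, mul_add]; abel

theorem br_sub_left (x y z : R) : lieBr (x - y) z = lieBr x z - lieBr y z := by
  simp only [lieBr, sub_mul, mul_sub]; abel

theorem br_sub_right (x y z : R) : lieBr x (y - z) = lieBr x y - lieBr x z := by
  simp only [lieBr, sub_mul, mul_sub]; abel

theorem br_neg_left (x y : R) : lieBr (-x) y = -lieBr x y := by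
  simp only [lieBr, neg_mul, mul_neg]; abel

theorem br_neg_right (x y : R) : lieBr x (-y) = -lieBr x y := by
  simp only [lieBr, neg_mul, mul_neg]; abel

theorem br_zero_left (x : R) : lieBr 0 x = 0 := by simp [lieBr]

theorem br_zero_right (x : R) : lieBr x 0 = 0 := by simp [lieBr]

theorem br_self (x : R) : lieBr x x = 0 := by simp [lieBr]

/-- linearized left alternative law -/
theorem lin1 (hR : IsAlternative R) (a b z : R) :
    a * b * z + b * a * z = a * (b * z) + b * (a * z) := by
  have h := hR.1 (a + b) z
  have ha := hR.1 a z
  have hb := hR.1 b z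
  simp only [add_mul, mul_add] at h
  linear_combination (norm := abel) h - ha - hb

/-- linearized right alternative law -/
theorem lin2 (hR : IsAlternative R) (y a b : R) :
    y * a * b + y * b * a = y * (a * b) + y * (b * a) := by
  have h := hR.2 (a + b) y
  have ha := hR.2 a y
  have hb := hR.2 b y
  simp only [add_mul, mul_add] at h
  linear_combination (norm := abel) h - ha - hb

section peirce

/-- flexible law with e outside -/
theorem flex_e (hR : IsAlternative R) (e : R) (hee : e * e = e) (w : R) : (e * w) * e = e * (w * e) := by
  have h := lin1 hR e w e
  have h2 := hR.2 e w
  rw [hee] at h2 h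
  linear_combination (norm := abel) h - h2

-- Peirce product rules.  Membership given by bare equations.
theorem P11_12 (hR : IsAlternative R) (e : R) {x y : R} (hx1 : e * x = x) (hx2 : x * e = x)
    (hy1 : e * y = y) (hy2 : y * e = 0) : e * (x * y) = x * y ∧ (x * y) * e = 0 := by
  constructor
  · have h := lin1 hR e x y
    simp only [hx1, hx2, hy1, zero_mul, mul_zero, add_zero, zero_add] at h
    linear_combination (norm := abel) - h
  · have h := lin2 hR x y e
    simp only [hx2, hy2, hy1, mul_zero, zero_mul, mul_zero, add_zero, zero_add] at h
    linear_combination (norm := abel) h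

theorem P12_22 (hR : IsAlternative R) (e : R) {x y : R} (hx1 : e * x = x) (hx2 : x * e = 0)
    (hy1 : e * y = 0) (hy2 : y * e = 0) : e * (x * y) = x * y ∧ (x * y) * e = 0 := by
  constructor
  · have h := lin1 hR e x y
    simp only [hx1, hx2, hy1, zero_mul, mul_zero, zero_mul, mul_zero, add_zero, zero_add] at h
    linear_combination (norm := abel) - h
  · have h := lin2 hR x y e
    simp only [hx2, hy2, hy1, mul_zero, mul_zero, zero_mul, mul_zero, add_zero, zero_add] at h
    linear_combination (norm := abel) h

theorem P12_21 (hR : IsAlternative R) (e : R) {x y : R} (hx1 : e * x = x) (hx2 : x * e = 0)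
    (hy1 : e * y = 0) (hy2 : y * e = y) : e * (x * y) = x * y ∧ (x * y) * e = x * y := by
  constructor
  · have h := lin1 hR e x y
    simp only [hx1, hx2, hy1, zero_mul, mul_zero, zero_mul, mul_zero, add_zero, zero_add] at h
    linear_combination (norm := abel) - h
  · have h := lin2 hR x y e
    simp only [hx2, hy2, hy1, mul_zero, zero_mul, zero_mul, mul_zero, add_zero, zero_add] at h
    linear_combination (norm := abel) h

theorem P12_12 (hR : IsAlternative R) (e : R) {x y : R} (hx1 : e * x = x) (hx2 : x * e = 0)
    (hy1 : e * y = y) (hy2 : y * e = 0) : e * (x * y) = 0 ∧ (x * y) * e = x * y := by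
  constructor
  · have h := lin1 hR e x y
    simp only [hx1, hx2, hy1, zero_mul, zero_mul, mul_zero, add_zero, zero_add] at h
    linear_combination (norm := abel) - h
  · have h := lin2 hR x y e
    simp only [hx2, hy2, hy1, mul_zero, zero_mul, zero_mul, mul_zero, add_zero, zero_add] at h
    linear_combination (norm := abel) h

theorem P21_21 (hR : IsAlternative R) (e : R) {x y : R} (hx1 : e * x = 0) (hx2 : x * e = x)
    (hy1 : e * y = 0) (hy2 : y * e = y) : e * (x * y) = x * y ∧ (x * y) * e = 0 := by
  constructor
  · have h := lin1 hR e x y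
    simp only [hx1, hx2, hy1, zero_mul, mul_zero, zero_mul, mul_zero, add_zero, zero_add] at h
    linear_combination (norm := abel) - h
  · have h := lin2 hR x y e
    simp only [hx2, hy2, hy1, mul_zero, zero_mul, mul_zero, add_zero, zero_add] at h
    linear_combination (norm := abel) h

theorem P21_12 (hR : IsAlternative R) (e : R) {x y : R} (hx1 : e * x = 0) (hx2 : x * e = x)
    (hy1 : e * y = y) (hy2 : y * e = 0) : e * (x * y) = 0 ∧ (x * y) * e = 0 := by
  constructor
  · have h := lin1 hR e x y
    simp only [hx1, hx2, hy1, zero_mul, zero_mul, mul_zero, add_zero, zero_add] at h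
    linear_combination (norm := abel) - h
  · have h := lin2 hR x y e
    simp only [hx2, hy2, hy1, mul_zero, zero_mul, mul_zero, add_zero, zero_add] at h
    linear_combination (norm := abel) h

theorem P21_11 (hR : IsAlternative R) (e : R) {x y : R} (hx1 : e * x = 0) (hx2 : x * e = x)
    (hy1 : e * y = y) (hy2 : y * e = y) : e * (x * y) = 0 ∧ (x * y) * e = x * y := by
  constructor
  · have h := lin1 hR e x y
    simp only [hx1, hx2, hy1, zero_mul, zero_mul, mul_zero, add_zero, zero_add] at h
    linear_combination (norm := abel) - h
  · have h := lin2 hR x y e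
    simp only [hx2, hy2, hy1, zero_mul, mul_zero, add_zero, zero_add] at h
    linear_combination (norm := abel) h

theorem P22_21 (hR : IsAlternative R) (e : R) {x y : R} (hx1 : e * x = 0) (hx2 : x * e = 0)
    (hy1 : e * y = 0) (hy2 : y * e = y) : e * (x * y) = 0 ∧ (x * y) * e = x * y := by
  constructor
  · have h := lin1 hR e x y
    simp only [hx1, hx2, hy1, zero_mul, mul_zero, zero_mul, mul_zero, add_zero, zero_add] at h
    linear_combination (norm := abel) - h
  · have h := lin2 hR x y e
    simp only [hx2, hy2, hy1, zero_mul, mul_zero, zero_mul, mul_zero, add_zero, zero_add] at h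
    linear_combination (norm := abel) h

theorem P11_21 (hR : IsAlternative R) (e : R) {x y : R} (hx1 : e * x = x) (hx2 : x * e = x)
    (hy1 : e * y = 0) (hy2 : y * e = y) : x * y = 0 := by
  have hyx := P21_11 hR e hy1 hy2 hx1 hx2
  have h := lin1 hR x y e
  simp only [hy2, hx2, hyx.2, zero_mul, mul_zero, add_zero, zero_add] at h
  have h2 := lin2 hR x y e
  simp only [hx2, hy1, hy2, zero_mul, mul_zero, add_zero, zero_add] at h2
  linear_combination (norm := abel) h2 - h

theorem P12_11 (hR : IsAlternative R) (e : R) {x y : R} (hx1 : e * x = x) (hx2 : x * e = 0)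
    (hy1 : e * y = y) (hy2 : y * e = y) : x * y = 0 := by
  have hyx := P11_12 hR e hy1 hy2 hx1 hx2
  have h1 := lin1 hR x y e
  simp only [hy2, hx2, hyx.2, zero_mul, zero_mul, mul_zero, add_zero, zero_add] at h1
  -- h1 : (x*y)*e + 0 = x*y + y*0   →   (x*y)*e = x*y
  have h2 := lin2 hR x y e
  simp only [hx2, hy2, hy1, zero_mul, zero_mul, mul_zero, add_zero, zero_add] at h2
  -- h2 : (x*y)*e + 0 = x*y + x*y
  linear_combination (norm := abel) h1 - h2

theorem P22_12 (hR : IsAlternative R) (e : R) {x y : R} (hx1 : e * x = 0) (hx2 : x * e = 0)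
    (hy1 : e * y = y) (hy2 : y * e = 0) : x * y = 0 := by
  have hyx := P12_22 hR e hy1 hy2 hx1 hx2
  have h1 := lin1 hR x y e
  simp only [hy2, hx2, hyx.2, mul_zero, zero_mul, zero_mul, mul_zero, add_zero, zero_add] at h1
  have h2 := lin2 hR x y e
  simp only [hx2, hy2, hy1, mul_zero, zero_mul, zero_mul, mul_zero, add_zero, zero_add] at h2
  linear_combination (norm := abel) h1 - h2

theorem P21_22 (hR : IsAlternative R) (e : R) {x y : R} (hx1 : e * x = 0) (hx2 : x * e = x)
    (hy1 : e * y = 0) (hy2 : y * e = 0) : x * y = 0 := by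
  have hyx := P22_21 hR e hy1 hy2 hx1 hx2
  have h1 := lin1 hR x y e
  simp only [hy2, hx2, hyx.2, mul_zero, zero_mul, mul_zero, add_zero, zero_add] at h1
  have h2 := lin2 hR x y e
  simp only [hx2, hy2, hy1, mul_zero, mul_zero, zero_mul, mul_zero, add_zero, zero_add] at h2
  linear_combination (norm := abel) h2 - h1

end peirce

end LTDaux
namespace LTDaux
variable {R : Type*} [NonUnitalNonAssocRing R]

/-- If `[[T,e],e] = 0` then `T` is diagonal, i.e. `eT = Te`. -/
theorem diag_of_brbr (hR : IsAlternative R) (e : R) (hee : e * e = e) {T : R}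
    (h0 : lieBr (lieBr T e) e = 0) : e * T = T * e := by
  have hA : T * e * e = T * e := by rw [hR.2 e T, hee]
  have hB : e * (e * T) = e * T := by rw [← hR.1 e T, hee]
  have hC : e * T * e = e * (T * e) := flex_e hR e hee T
  have h1 : T * e + e * T = e * (T * e) + e * (T * e) := by
    simp only [lieBr, sub_mul, mul_sub] at h0
    linear_combination (norm := abel) h0 - hA + hC - hB
  have hB2 : e * (e * (T * e)) = e * (T * e) := by rw [← hR.1 e (T * e), hee]
  have h2 : e * T = e * (T * e) := by
    have h := congrArg (fun t => e * t) h1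
    simp only [mul_add] at h
    linear_combination (norm := abel) h - hB + hB2 + hB2
  have hC2 : (e * (T * e)) * e = e * (T * e) := by
    have h := flex_e hR e hee (T * e)
    rw [hA] at h; exact h
  have h3 : T * e = e * (T * e) := by
    have h := congrArg (fun t => t * e) h1
    simp only [add_mul] at h
    linear_combination (norm := abel) h - hA - hC + hC2 + hC2
  exact h2.trans h3.symm

/-- projection of a diagonal element to `R₁₁` -/
theorem diag_proj11 (hR : IsAlternative R) (e : R) (hee : e * e = e) {w : R}
    (hw : e * w = w * e) : e * (e * w) = e * w ∧ (e * w) * e = e * w := by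
  have h1 : e * (e * w) = e * w := by rw [← hR.1 e w, hee]
  refine ⟨h1, ?_⟩
  rw [flex_e hR e hee w, ← hw, h1]

/-- projection of a diagonal element to `R₂₂` -/
theorem diag_proj22 (hR : IsAlternative R) (e : R) (hee : e * e = e) {w : R}
    (hw : e * w = w * e) : e * (w - e * w) = 0 ∧ (w - e * w) * e = 0 := by
  have h := diag_proj11 hR e hee hw
  constructor
  · rw [mul_sub, h.1, sub_self]
  · rw [sub_mul, h.2, ← hw, sub_self]

/-- For diagonal `w` and `c ∈ R₂₁`, the bracket `[w,c]` lies in `R₂₁`. -/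
theorem diag_br_21 (hR : IsAlternative R) (e : R) (hee : e * e = e) {w c : R}
    (hw : e * w = w * e) (hc1 : e * c = 0) (hc2 : c * e = c) :
    e * lieBr w c = 0 ∧ (lieBr w c) * e = lieBr w c := by
  have h11 := diag_proj11 hR e hee hw
  have h22 := diag_proj22 hR e hee hw
  have hz1 : (e * w) * c = 0 := P11_21 hR e h11.1 h11.2 hc1 hc2
  have hz2 : c * (w - e * w) = 0 := P21_22 hR e hc1 hc2 h22.1 h22.2
  have hm1 := P22_21 hR e h22.1 h22.2 hc1 hc2
  have hm2 := P21_11 hR e hc1 hc2 h11.1 h11.2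
  have key1 : w * c = (w - e * w) * c := by rw [sub_mul, hz1, sub_zero]
  have key2 : c * w = c * (e * w) := by
    have h : c * w - c * (e * w) = 0 := by rw [← mul_sub, hz2]
    linear_combination (norm := abel) h
  constructor
  · rw [lieBr, mul_sub, key1, key2, hm1.1, hm2.1, sub_zero]
  · rw [lieBr, sub_mul, key1, key2, hm1.2, hm2.2]

/-- For diagonal `w` and `m ∈ R₁₂`, the bracket `[w,m]` lies in `R₁₂`. -/
theorem diag_br_12 (hR : IsAlternative R) (e : R) (hee : e * e = e) {w m : R}
    (hw : e * w = w * e) (hm1 : e * m = m) (hm2 : m * e = 0) :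
    e * lieBr w m = lieBr w m ∧ (lieBr w m) * e = 0 := by
  have h11 := diag_proj11 hR e hee hw
  have h22 := diag_proj22 hR e hee hw
  have hz1 : (w - e * w) * m = 0 := P22_12 hR e h22.1 h22.2 hm1 hm2
  have hz2 : m * (e * w) = 0 := P12_11 hR e hm1 hm2 h11.1 h11.2
  have hp1 := P11_12 hR e h11.1 h11.2 hm1 hm2
  have hp2 := P12_22 hR e hm1 hm2 h22.1 h22.2
  have key1 : w * m = (e * w) * m := by
    have h : w * m - (e * w) * m = 0 := by rw [← sub_mul, hz1]
    linear_combination (norm := abel) h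
  have key2 : m * w = m * (w - e * w) := by
    have h : m * w - m * (w - e * w) = 0 := by
      rw [← mul_sub]
      have : w - (w - e * w) = e * w := by abel
      rw [this, hz2]
    linear_combination (norm := abel) h
  constructor
  · rw [lieBr, mul_sub, key1, key2, hp1.1, hp2.1]
  · rw [lieBr, sub_mul, key1, key2, hp1.2, hp2.2, sub_zero]

/-- `[b,c]` is diagonal for `b ∈ R₁₂`, `c ∈ R₂₁`. -/
theorem br_12_21_diag (hR : IsAlternative R) (e : R) {b c : R}
    (hb1 : e * b = b) (hb2 : b * e = 0) (hc1 : e * c = 0) (hc2 : c * e = c) :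
    e * lieBr b c = (lieBr b c) * e := by
  have h1 := P12_21 hR e hb1 hb2 hc1 hc2
  have h2 := P21_12 hR e hc1 hc2 hb1 hb2
  rw [lieBr, mul_sub, sub_mul, h1.1, h1.2, h2.1, h2.2]

/-- `[c,b]` is diagonal for `c ∈ R₂₁`, `b ∈ R₁₂`. -/
theorem br_21_12_diag (hR : IsAlternative R) (e : R) {c b : R}
    (hc1 : e * c = 0) (hc2 : c * e = c) (hb1 : e * b = b) (hb2 : b * e = 0) :
    e * lieBr c b = (lieBr c b) * e := by
  have h1 := P21_12 hR e hc1 hc2 hb1 hb2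
  have h2 := P12_21 hR e hb1 hb2 hc1 hc2
  rw [lieBr, mul_sub, sub_mul, h1.1, h1.2, h2.1, h2.2]

/-- `[u,v] ∈ R₂₁` for `u, v ∈ R₁₂`. -/
theorem br_12_12_mem (hR : IsAlternative R) (e : R) {u v : R}
    (hu1 : e * u = u) (hu2 : u * e = 0) (hv1 : e * v = v) (hv2 : v * e = 0) :
    e * lieBr u v = 0 ∧ (lieBr u v) * e = lieBr u v := by
  have h1 := P12_12 hR e hu1 hu2 hv1 hv2
  have h2 := P12_12 hR e hv1 hv2 hu1 hu2
  constructor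
  · rw [lieBr, mul_sub, h1.1, h2.1, sub_zero]
  · rw [lieBr, sub_mul, h1.2, h2.2]

/-- `[u,v] ∈ R₁₂` for `u, v ∈ R₂₁`. -/
theorem br_21_21_mem (hR : IsAlternative R) (e : R) {u v : R}
    (hu1 : e * u = 0) (hu2 : u * e = u) (hv1 : e * v = 0) (hv2 : v * e = v) :
    e * lieBr u v = lieBr u v ∧ (lieBr u v) * e = 0 := by
  have h1 := P21_21 hR e hu1 hu2 hv1 hv2
  have h2 := P21_21 hR e hv1 hv2 hu1 hu2
  constructor
  · rw [lieBr, mul_sub, h1.1, h2.1]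
  · rw [lieBr, sub_mul, h1.2, h2.2, sub_zero]

theorem center_add {z w : R} (hz : z ∈ ringCenter R) (hw : w ∈ ringCenter R) :
    z + w ∈ ringCenter R := by
  obtain ⟨z1, z2, z3, z4⟩ := hz
  obtain ⟨w1, w2, w3, w4⟩ := hw
  refine ⟨fun x y => ?_, fun x y => ?_, fun x y => ?_, fun x => ?_⟩
  · simp only [add_mul, z1, w1]
  · simp only [add_mul, mul_add, z2, w2]
  · simp only [mul_add, z3, w3]
  · simp only [add_mul, mul_add, z4, w4]

theorem center_neg {z : R} (hz : z ∈ ringCenter R) : -z ∈ ringCenter R := by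
  obtain ⟨z1, z2, z3, z4⟩ := hz
  refine ⟨fun x y => ?_, fun x y => ?_, fun x y => ?_, fun x => ?_⟩
  · simp only [neg_mul, z1]
  · simp only [neg_mul, mul_neg, z2]
  · simp only [mul_neg, z3]
  · simp only [neg_mul, mul_neg, z4]

theorem center_sub {z w : R} (hz : z ∈ ringCenter R) (hw : w ∈ ringCenter R) :
    z - w ∈ ringCenter R := by
  rw [sub_eq_add_neg]; exact center_add hz (center_neg hw)

end LTDaux
namespace LTDaux
variable {R : Type*} [NonUnitalNonAssocRing R]

theorem D_zero {D : R → R} (hD : IsLieTripleDerivable D) : D 0 = 0 := by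
  have h := hD 0 0 0
  simpa [br_zero_left, br_zero_right] using h

section claims

-- atomic bracket values
theorem br12_e (e : R) {b : R} (hb1 : e * b = b) (hb2 : b * e = 0) : lieBr b e = -b := by
  rw [lieBr, hb2, hb1, zero_sub]

theorem br_e12 (e : R) {b : R} (hb1 : e * b = b) (hb2 : b * e = 0) : lieBr e b = b := by
  rw [lieBr, hb1, hb2, sub_zero]

theorem br21_e (e : R) {c : R} (hc1 : e * c = 0) (hc2 : c * e = c) : lieBr c e = c := by
  rw [lieBr, hc1, hc2, sub_zero]

theorem br_e21 (e : R) {c : R} (hc1 : e * c = 0) (hc2 : c * e = c) : lieBr e c = -c := by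
  rw [lieBr, hc1, hc2, zero_sub]

theorem brdiag_e (e : R) {w : R} (hw : e * w = w * e) : lieBr w e = 0 := by
  rw [lieBr, ← hw, sub_self]

theorem br_ediag (e : R) {w : R} (hw : e * w = w * e) : lieBr e w = 0 := by
  rw [lieBr, hw, sub_self]


/-- the defect of `D` on `e + b`, `b ∈ R₁₂`, is diagonal. -/
theorem defect12_diag (hR : IsAlternative R) (e : R) (hee : e * e = e) {D : R → R} (hD : IsLieTripleDerivable D) {b : R} (hb1 : e * b = b) (hb2 : b * e = 0) :
    e * (D (e + b) - D e - D b) = (D (e + b) - D e - D b) * e := by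
  apply diag_of_brbr hR e hee
  have vb : lieBr b e = -b := br12_e e hb1 hb2
  have E1 := hD (e + b) e e
  have E2 := hD e e e
  have E3 := hD b e e
  simp only [br_add_left, br_add_right, br_sub_left, br_sub_right, br_neg_left,
    br_neg_right, br_zero_left, br_zero_right, br_self, vb, D_zero hD, neg_zero,
    zero_add, add_zero, neg_neg] at E1 E2 E3 ⊢
  linear_combination (norm := abel) - E1 + E2 + E3

/-- the defect of `D` on `e + u`, `u ∈ R₂₁`, is diagonal. -/
theorem defect21_diag (hR : IsAlternative R) (e : R) (hee : e * e = e) {D : R → R} (hD : IsLieTripleDerivable D) {u : R} (hu1 : e * u = 0) (hu2 : u * e = u) :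
    e * (D (e + u) - D e - D u) = (D (e + u) - D e - D u) * e := by
  apply diag_of_brbr hR e hee
  have vu : lieBr u e = u := br21_e e hu1 hu2
  have E1 := hD (e + u) e e
  have E2 := hD e e e
  have E3 := hD u e e
  simp only [br_add_left, br_add_right, br_sub_left, br_sub_right, br_neg_left,
    br_neg_right, br_zero_left, br_zero_right, br_self, vu, D_zero hD, neg_zero,
    zero_add, add_zero, neg_neg] at E1 E2 E3 ⊢
  linear_combination (norm := abel) - E1 + E2 + E3

/-- the defect of `D` on `e + b`, `b ∈ R₁₂`, commutes with every element of `R₂₁`. -/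
theorem defect12_comm (hR : IsAlternative R) (e : R) (hee : e * e = e) {D : R → R} (hD : IsLieTripleDerivable D) {b c : R} (hb1 : e * b = b) (hb2 : b * e = 0)
    (hc1 : e * c = 0) (hc2 : c * e = c) :
    lieBr (D (e + b) - D e - D b) c = 0 := by
  have hdiag := defect12_diag hR e hee hD hb1 hb2
  have hmem := diag_br_21 hR e hee hdiag hc1 hc2
  have vec : lieBr e c = -c := br_e21 e hc1 hc2
  have vce : lieBr c e = c := br21_e e hc1 hc2
  have vbc : lieBr (lieBr b c) e = 0 := by
    have h := br_12_21_diag hR e hb1 hb2 hc1 hc2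
    rw [lieBr, ← h, sub_self]
  have key : lieBr (lieBr (D (e + b) - D e - D b) c) e = 0 := by
    have E1 := hD (e + b) c e
    have E2 := hD e c e
    have E3 := hD b c e
    simp only [br_add_left, br_add_right, br_sub_left, br_sub_right, br_neg_left,
      br_neg_right, br_zero_left, br_zero_right, br_self, vec, vce, vbc, D_zero hD, neg_zero,
      zero_add, add_zero, neg_neg] at E1 E2 E3 ⊢
    linear_combination (norm := abel) - E1 + E2 + E3
  have h2 : lieBr (lieBr (D (e + b) - D e - D b) c) e
      = lieBr (D (e + b) - D e - D b) c := by
    rw [lieBr, hmem.1, hmem.2, sub_zero]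
  rw [h2] at key; exact key

/-- the defect of `D` on `e + u`, `u ∈ R₂₁`, commutes with every element of `R₁₂`. -/
theorem defect21_comm (hR : IsAlternative R) (e : R) (hee : e * e = e) {D : R → R} (hD : IsLieTripleDerivable D) {u m : R} (hu1 : e * u = 0) (hu2 : u * e = u)
    (hm1 : e * m = m) (hm2 : m * e = 0) :
    lieBr (D (e + u) - D e - D u) m = 0 := by
  have hdiag := defect21_diag hR e hee hD hu1 hu2
  have hmem := diag_br_12 hR e hee hdiag hm1 hm2
  have vem : lieBr e m = m := br_e12 e hm1 hm2
  have vme : lieBr m e = -m := br12_e e hm1 hm2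
  have vum : lieBr (lieBr u m) e = 0 := by
    have h := br_21_12_diag hR e hu1 hu2 hm1 hm2
    rw [lieBr, ← h, sub_self]
  have key : lieBr (lieBr (D (e + u) - D e - D u) m) e = 0 := by
    have E1 := hD (e + u) m e
    have E2 := hD e m e
    have E3 := hD u m e
    simp only [br_add_left, br_add_right, br_sub_left, br_sub_right, br_neg_left,
      br_neg_right, br_zero_left, br_zero_right, br_self, vem, vme, vum, D_zero hD, neg_zero,
      zero_add, add_zero, neg_neg] at E1 E2 E3 ⊢
    linear_combination (norm := abel) - E1 + E2 + E3
  have h2 : lieBr (lieBr (D (e + u) - D e - D u) m) e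
      = -(lieBr (D (e + u) - D e - D u) m) := by
    rw [lieBr, hmem.1, hmem.2, zero_sub]
  rw [h2] at key
  exact neg_eq_zero.mp key

/-- additivity of `D` across `R₁₂ ⊕ R₂₁`. -/
theorem C2 (hR : IsAlternative R) (e : R) (hee : e * e = e) {D : R → R} (hD : IsLieTripleDerivable D) {b c : R} (hb1 : e * b = b) (hb2 : b * e = 0)
    (hc1 : e * c = 0) (hc2 : c * e = c) :
    D (b + c) = D b + D c := by
  have hnc1 : e * (-c) = 0 := by rw [mul_neg, hc1, neg_zero]
  have hnc2 : (-c) * e = -c := by rw [neg_mul, hc2]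
  have hT1d := defect12_diag hR e hee hD hb1 hb2
  have hT2d := defect21_diag hR e hee hD hnc1 hnc2
  have f2 : lieBr (D (e + b) - D e - D b) c = 0 := defect12_comm hR e hee hD hb1 hb2 hc1 hc2
  have g2 : lieBr (D (e + -c) - D e - D (-c)) b = 0 :=
    defect21_comm hR e hee hD hnc1 hnc2 hb1 hb2
  have g2' : lieBr b (D (e + -c) - D e - D (-c)) = 0 := by
    rw [lieBr] at g2 ⊢
    linear_combination (norm := abel) - g2
  have F2 := congrArg (fun t => lieBr t e) f2
  have G2 := congrArg (fun t => lieBr t e) g2'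
  have vbe : lieBr b e = -b := br12_e e hb1 hb2
  have veb : lieBr e b = b := br_e12 e hb1 hb2
  have vce : lieBr c e = c := br21_e e hc1 hc2
  have vec : lieBr e c = -c := br_e21 e hc1 hc2
  have vbc : lieBr (lieBr b c) e = 0 := by
    have h := br_12_21_diag hR e hb1 hb2 hc1 hc2
    rw [lieBr, ← h, sub_self]
  have E1 := hD (e + b) (e + -c) e
  have E2 := hD (e + b) e e
  have E3 := hD e (e + -c) e
  have E4 := hD b (-c) e
  have E5 := hD e e e
  have A1 : lieBr (lieBr (e + b) (e + -c)) e = b + c := by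
    simp only [br_add_left, br_add_right, br_neg_left, br_neg_right, br_zero_left,
      br_zero_right, br_self, vbe, veb, vce, vec, vbc, zero_add, add_zero, neg_neg]
    all_goals abel
  rw [A1] at E1
  simp only [br_add_left, br_add_right, br_sub_left, br_sub_right, br_neg_left,
    br_neg_right, br_zero_left, br_zero_right, br_self, vbe, veb, vce, vec, vbc,
    D_zero hD, neg_zero, zero_add, add_zero, neg_neg] at E1 E2 E3 E4 E5 F2 G2
  linear_combination (norm := abel) E1 - E2 - E3 - E4 + E5 - F2 + G2

end claims
end LTDaux
namespace LTDaux
variable {R : Type*} [NonUnitalNonAssocRing R]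

/-- additivity of `D` on `R₁₂`. -/
theorem C1 (hR : IsAlternative R) (e : R) (hee : e * e = e) {D : R → R}
    (hD : IsLieTripleDerivable D) {u v : R} (hu1 : e * u = u) (hu2 : u * e = 0)
    (hv1 : e * v = v) (hv2 : v * e = 0) :
    D (u + v) = D u + D v := by
  have hw := br_12_12_mem hR e hu1 hu2 hv1 hv2
  have hnw1 : e * (-(lieBr u v)) = 0 := by rw [mul_neg, hw.1, neg_zero]
  have hnw2 : (-(lieBr u v)) * e = -(lieBr u v) := by rw [neg_mul, hw.2]
  have hsum1 : e * (u + v) = u + v := by rw [mul_add, hu1, hv1]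
  have hsum2 : (u + v) * e = 0 := by rw [add_mul, hu2, hv2, add_zero]
  have hnv1 : e * (-v) = -v := by rw [mul_neg, hv1]
  have hnv2 : (-v) * e = 0 := by rw [neg_mul, hv2, neg_zero]
  have c2a := C2 hR e hee hD hsum1 hsum2 hnw1 hnw2
  have c2b := C2 hR e hee hD hu1 hu2 hnw1 hnw2
  have c2c := C2 hR e hee hD hv1 hv2 hnw1 hnw2
  have f1 : lieBr (D (e + u) - D e - D u) e = 0 :=
    brdiag_e e (defect12_diag hR e hee hD hu1 hu2)
  have g1 : lieBr e (D (e + -v) - D e - D (-v)) = 0 :=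
    br_ediag e (defect12_diag hR e hee hD hnv1 hnv2)
  have F1 := congrArg (fun t => lieBr t e) f1
  have G1 := congrArg (fun t => lieBr t e) g1
  have vue : lieBr u e = -u := br12_e e hu1 hu2
  have veu : lieBr e u = u := br_e12 e hu1 hu2
  have vve : lieBr v e = -v := br12_e e hv1 hv2
  have vev : lieBr e v = v := br_e12 e hv1 hv2
  have vwe : lieBr (lieBr u v) e = lieBr u v := br21_e e hw.1 hw.2
  have E1 := hD (e + u) (e + -v) e
  have E2 := hD u (e + -v) e
  have E3 := hD (e + u) (-v) e
  have E4 := hD u (-v) e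
  have E5 := hD e e e
  have A1 : lieBr (lieBr (e + u) (e + -v)) e = (u + v) + -(lieBr u v) := by
    simp only [br_add_left, br_add_right, br_neg_left, br_neg_right, br_zero_left,
      br_zero_right, br_self, vue, veu, vve, vev, vwe, zero_add, add_zero, neg_neg]
    all_goals abel
  have A2 : lieBr (lieBr u (e + -v)) e = u + -(lieBr u v) := by
    simp only [br_add_left, br_add_right, br_neg_left, br_neg_right, br_zero_left,
      br_zero_right, br_self, vue, veu, vve, vev, vwe, zero_add, add_zero, neg_neg]
    all_goals abel
  have A3 : lieBr (lieBr (e + u) (-v)) e = v + -(lieBr u v) := by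
    simp only [br_add_left, br_add_right, br_neg_left, br_neg_right, br_zero_left,
      br_zero_right, br_self, vue, veu, vve, vev, vwe, zero_add, add_zero, neg_neg]
    all_goals abel
  have A4 : lieBr (lieBr u (-v)) e = -(lieBr u v) := by
    simp only [br_add_left, br_add_right, br_neg_left, br_neg_right, br_zero_left,
      br_zero_right, br_self, vue, veu, vve, vev, vwe, zero_add, add_zero, neg_neg]
    all_goals abel
  rw [A1, c2a] at E1
  rw [A2, c2b] at E2
  rw [A3, c2c] at E3
  rw [A4] at E4
  simp only [br_add_left, br_add_right, br_sub_left, br_sub_right, br_neg_left,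
    br_neg_right, br_zero_left, br_zero_right, br_self, vue, veu, vve, vev, vwe,
    D_zero hD, neg_zero, zero_add, add_zero, neg_neg] at E1 E2 E3 E4 E5 F1 G1
  linear_combination (norm := abel) E1 - E2 - E3 + E4 - E5 + F1 + G1

/-- additivity of `D` on `R₂₁`. -/
theorem C1' (hR : IsAlternative R) (e : R) (hee : e * e = e) {D : R → R}
    (hD : IsLieTripleDerivable D) {u v : R} (hu1 : e * u = 0) (hu2 : u * e = u)
    (hv1 : e * v = 0) (hv2 : v * e = v) :
    D (u + v) = D u + D v := by
  have hw := br_21_21_mem hR e hu1 hu2 hv1 hv2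
  have hsum1 : e * (u + v) = 0 := by rw [mul_add, hu1, hv1, add_zero]
  have hsum2 : (u + v) * e = u + v := by rw [add_mul, hu2, hv2]
  have hnv1 : e * (-v) = 0 := by rw [mul_neg, hv1, neg_zero]
  have hnv2 : (-v) * e = -v := by rw [neg_mul, hv2]
  have c2a := C2 hR e hee hD hw.1 hw.2 hsum1 hsum2
  have c2b := C2 hR e hee hD hw.1 hw.2 hu1 hu2
  have c2c := C2 hR e hee hD hw.1 hw.2 hv1 hv2
  have f1 : lieBr (D (e + u) - D e - D u) e = 0 :=
    brdiag_e e (defect21_diag hR e hee hD hu1 hu2)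
  have g1 : lieBr e (D (e + -v) - D e - D (-v)) = 0 :=
    br_ediag e (defect21_diag hR e hee hD hnv1 hnv2)
  have F1 := congrArg (fun t => lieBr t e) f1
  have G1 := congrArg (fun t => lieBr t e) g1
  have vue : lieBr u e = u := br21_e e hu1 hu2
  have veu : lieBr e u = -u := br_e21 e hu1 hu2
  have vve : lieBr v e = v := br21_e e hv1 hv2
  have vev : lieBr e v = -v := br_e21 e hv1 hv2
  have vwe : lieBr (lieBr u v) e = -(lieBr u v) := br12_e e hw.1 hw.2
  have E1 := hD (e + u) (e + -v) e
  have E2 := hD u (e + -v) e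
  have E3 := hD (e + u) (-v) e
  have E4 := hD u (-v) e
  have E5 := hD e e e
  have A1 : lieBr (lieBr (e + u) (e + -v)) e = lieBr u v + (u + v) := by
    simp only [br_add_left, br_add_right, br_neg_left, br_neg_right, br_zero_left,
      br_zero_right, br_self, vue, veu, vve, vev, vwe, zero_add, add_zero, neg_neg]
    all_goals abel
  have A2 : lieBr (lieBr u (e + -v)) e = lieBr u v + u := by
    simp only [br_add_left, br_add_right, br_neg_left, br_neg_right, br_zero_left,
      br_zero_right, br_self, vue, veu, vve, vev, vwe, zero_add, add_zero, neg_neg]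
    all_goals abel
  have A3 : lieBr (lieBr (e + u) (-v)) e = lieBr u v + v := by
    simp only [br_add_left, br_add_right, br_neg_left, br_neg_right, br_zero_left,
      br_zero_right, br_self, vue, veu, vve, vev, vwe, zero_add, add_zero, neg_neg]
    all_goals abel
  have A4 : lieBr (lieBr u (-v)) e = lieBr u v := by
    simp only [br_add_left, br_add_right, br_neg_left, br_neg_right, br_zero_left,
      br_zero_right, br_self, vue, veu, vve, vev, vwe, zero_add, add_zero, neg_neg]
    all_goals abel
  rw [A1, c2a] at E1
  rw [A2, c2b] at E2
  rw [A3, c2c] at E3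
  rw [A4] at E4
  simp only [br_add_left, br_add_right, br_sub_left, br_sub_right, br_neg_left,
    br_neg_right, br_zero_left, br_zero_right, br_self, vue, veu, vve, vev, vwe,
    D_zero hD, neg_zero, zero_add, add_zero, neg_neg] at E1 E2 E3 E4 E5 F1 G1
  linear_combination (norm := abel) E1 - E2 - E3 + E4 - E5 + F1 + G1

end LTDaux
namespace LTDaux
variable {R : Type*} [NonUnitalNonAssocRing R]

/-- the defect of `D` on `a + d`, `a ∈ R₁₁`, `d ∈ R₂₂`, is central. -/
theorem C3 (hR : IsAlternative R) (e : R) (hee : e * e = e) (hi : CondI e)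
    {D : R → R} (hD : IsLieTripleDerivable D) {a d : R}
    (ha1 : e * a = a) (ha2 : a * e = a) (hd1 : e * d = 0) (hd2 : d * e = 0) :
    D (a + d) - D a - D d ∈ ringCenter R := by
  have hae : e * a = a * e := ha1.trans ha2.symm
  have hde : e * d = d * e := hd1.trans hd2.symm
  have vae : lieBr a e = 0 := brdiag_e e hae
  have vde : lieBr d e = 0 := brdiag_e e hde
  have key0 : lieBr (lieBr (D (a + d) - D a - D d) e) e = 0 := by
    have E1 := hD (a + d) e e
    have E2 := hD a e e
    have E3 := hD d e e
    simp only [br_add_left, br_add_right, br_sub_left, br_sub_right, br_neg_left,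
      br_neg_right, br_zero_left, br_zero_right, br_self, vae, vde,
      D_zero hD, neg_zero, zero_add, add_zero, neg_neg] at E1 E2 E3 ⊢
    linear_combination (norm := abel) - E1 + E2 + E3
  have hdiag := diag_of_brbr hR e hee key0
  have hcomm : ∀ m : R, e * m = m → m * e = 0 →
      lieBr m (D (a + d) - D a - D d) = 0 := by
    intro m hm1 hm2
    have vem : lieBr e m = m := br_e12 e hm1 hm2
    have vma : lieBr m a = -(a * m) := by
      rw [lieBr, P12_11 hR e hm1 hm2 ha1 ha2, zero_sub]
    have vmd : lieBr m d = m * d := by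
      rw [lieBr, P22_12 hR e hd1 hd2 hm1 hm2, sub_zero]
    have ham := P11_12 hR e ha1 ha2 hm1 hm2
    have hmd := P12_22 hR e hm1 hm2 hd1 hd2
    have hnam1 : e * (-(a * m)) = -(a * m) := by rw [mul_neg, ham.1]
    have hnam2 : (-(a * m)) * e = 0 := by rw [neg_mul, ham.2, neg_zero]
    have c1 := C1 hR e hee hD hnam1 hnam2 hmd.1 hmd.2
    have E1 := hD e m (a + d)
    have E2 := hD e m a
    have E3 := hD e m d
    simp only [br_add_left, br_add_right, br_sub_left, br_sub_right, br_neg_left,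
      br_neg_right, br_zero_left, br_zero_right, br_self, vem, vma, vmd,
      D_zero hD, neg_zero, zero_add, add_zero, neg_neg] at E1 E2 E3
    rw [c1] at E1
    simp only [br_sub_right]
    linear_combination (norm := abel) - E1 + E2 + E3
  have m11 := diag_proj11 hR e hee hdiag
  have m22 := diag_proj22 hR e hee hdiag
  have hsum : e * (D (a + d) - D a - D d)
      + ((D (a + d) - D a - D d) - e * (D (a + d) - D a - D d))
      = D (a + d) - D a - D d := by abel
  have hmem := hi (e * (D (a + d) - D a - D d))
    ((D (a + d) - D a - D d) - e * (D (a + d) - D a - D d))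
    ⟨m11.1, m11.2⟩ ⟨m22.1, m22.2⟩ ?_
  · rwa [hsum] at hmem
  · intro m hm
    rw [hsum]
    have h := hcomm m hm.1 hm.2
    rw [lieBr] at h ⊢
    linear_combination (norm := abel) - h

/-- the four-term claim: the defect of `D` on `e + (r + s + w)` is central,
for `r ∈ R₁₂`, `s ∈ R₂₁`, `w` diagonal. -/
theorem CE (hR : IsAlternative R) (e : R) (hee : e * e = e) (hii : CondII e)
    {D : R → R} (hD : IsLieTripleDerivable D) {r s w : R}
    (hr1 : e * r = r) (hr2 : r * e = 0) (hs1 : e * s = 0) (hs2 : s * e = s)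
    (hw : e * w = w * e) :
    D (e + (r + s + w)) - D e - D r - D s - D w ∈ ringCenter R := by
  have vre : lieBr r e = -r := br12_e e hr1 hr2
  have vse : lieBr s e = s := br21_e e hs1 hs2
  have vwe : lieBr w e = 0 := brdiag_e e hw
  have key0 : lieBr (lieBr (D (e + (r + s + w)) - D e - D r - D s - D w) e) e = 0 := by
    have E1 := hD (e + (r + s + w)) e e
    have E0 := hD e e e
    have Er := hD r e e
    have Es := hD s e e
    have Ew := hD w e e
    have A1 : lieBr (lieBr (e + (r + s + w)) e) e = r + s := by
      simp only [br_add_left, br_add_right, br_neg_left, br_neg_right, br_zero_left,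
        br_zero_right, br_self, vre, vse, vwe, zero_add, add_zero, neg_neg]
      all_goals abel
    rw [A1, C2 hR e hee hD hr1 hr2 hs1 hs2] at E1
    simp only [br_add_left, br_add_right, br_sub_left, br_sub_right, br_neg_left,
      br_neg_right, br_zero_left, br_zero_right, br_self, vre, vse, vwe,
      D_zero hD, neg_zero, zero_add, add_zero, neg_neg] at E1 E0 Er Es Ew ⊢
    linear_combination (norm := abel) - E1 + E0 + Er + Es + Ew
  have hdiag := diag_of_brbr hR e hee key0
  have hcomm : ∀ c : R, e * c = 0 → c * e = c →
      lieBr (D (e + (r + s + w)) - D e - D r - D s - D w) c = 0 := by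
    intro c hc1 hc2
    have vec : lieBr e c = -c := br_e21 e hc1 hc2
    have vce : lieBr c e = c := br21_e e hc1 hc2
    have hrc := br_12_21_diag hR e hr1 hr2 hc1 hc2
    have vrc : lieBr (lieBr r c) e = 0 := brdiag_e e hrc
    have hsc := br_21_21_mem hR e hs1 hs2 hc1 hc2
    have vsc : lieBr (lieBr s c) e = -(lieBr s c) := br12_e e hsc.1 hsc.2
    have hwc := diag_br_21 hR e hee hw hc1 hc2
    have vwc : lieBr (lieBr w c) e = lieBr w c := br21_e e hwc.1 hwc.2
    have hnsc1 : e * (-(lieBr s c)) = -(lieBr s c) := by rw [mul_neg, hsc.1]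
    have hnsc2 : (-(lieBr s c)) * e = 0 := by rw [neg_mul, hsc.2, neg_zero]
    have hcc1 : e * (-c + lieBr w c) = 0 := by
      rw [mul_add, mul_neg, hc1, neg_zero, hwc.1, add_zero]
    have hcc2 : (-c + lieBr w c) * e = -c + lieBr w c := by
      rw [add_mul, neg_mul, hc2, hwc.2]
    have split1 := C2 hR e hee hD hnsc1 hnsc2 hcc1 hcc2
    have split2 := C1' hR e hee hD (by rw [mul_neg, hc1, neg_zero] : e * (-c) = 0)
      (by rw [neg_mul, hc2] : (-c) * e = -c) hwc.1 hwc.2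
    have E1 := hD (e + (r + s + w)) c e
    have E0 := hD e c e
    have Er := hD r c e
    have Es := hD s c e
    have Ew := hD w c e
    have A1 : lieBr (lieBr (e + (r + s + w)) c) e = -(lieBr s c) + (-c + lieBr w c) := by
      simp only [br_add_left, br_add_right, br_neg_left, br_neg_right, br_zero_left,
        br_zero_right, br_self, vec, vce, vrc, vsc, vwc, zero_add, add_zero, neg_neg]
      all_goals abel
    rw [A1, split1, split2] at E1
    have key : lieBr (lieBr (D (e + (r + s + w)) - D e - D r - D s - D w) c) e = 0 := by
      simp only [br_add_left, br_add_right, br_sub_left, br_sub_right, br_neg_left,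
        br_neg_right, br_zero_left, br_zero_right, br_self, vec, vce, vrc, vsc, vwc,
        D_zero hD, neg_zero, zero_add, add_zero, neg_neg] at E1 E0 Er Es Ew ⊢
      linear_combination (norm := abel) - E1 + E0 + Er + Es + Ew
    have hmem := diag_br_21 hR e hee hdiag hc1 hc2
    have h2 : lieBr (lieBr (D (e + (r + s + w)) - D e - D r - D s - D w) c) e
        = lieBr (D (e + (r + s + w)) - D e - D r - D s - D w) c := by
      rw [lieBr, hmem.1, hmem.2, sub_zero]
    rw [h2] at key; exact key
  have m11 := diag_proj11 hR e hee hdiag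
  have m22 := diag_proj22 hR e hee hdiag
  have hsum : e * (D (e + (r + s + w)) - D e - D r - D s - D w)
      + ((D (e + (r + s + w)) - D e - D r - D s - D w)
        - e * (D (e + (r + s + w)) - D e - D r - D s - D w))
      = D (e + (r + s + w)) - D e - D r - D s - D w := by abel
  have hmem := hii (e * (D (e + (r + s + w)) - D e - D r - D s - D w))
    ((D (e + (r + s + w)) - D e - D r - D s - D w)
      - e * (D (e + (r + s + w)) - D e - D r - D s - D w))
    ⟨m11.1, m11.2⟩ ⟨m22.1, m22.2⟩ ?_
  · rwa [hsum] at hmem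
  · intro c hc
    rw [hsum]
    exact hcomm c hc.1 hc.2

end LTDaux
theorem lieTripleDer_add_four
    {R : Type*} [NonUnitalNonAssocRing R] (hR : IsAlternative R)
    (e : R) (he : IsNontrivialIdempotent e) (hi : CondI e) (hii : CondII e)
    (D : R → R) (hD : IsLieTripleDerivable D) :
    ∀ a b c d : R, a ∈ peirce11 e → b ∈ peirce12 e → c ∈ peirce21 e → d ∈ peirce22 e →
      ∃ z ∈ ringCenter R, D (a + b + c + d) = D a + D b + D c + D d + z := by
  intro a b c d ha hb hc hd
  have hee : e * e = e := he.1
  have hw : e * (a + d - e) = (a + d - e) * e := by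
    rw [mul_sub, mul_add, sub_mul, add_mul, ha.1, ha.2, hd.1, hd.2]
  have h1 := LTDaux.CE hR e hee hii hD hb.1 hb.2 hc.1 hc.2 hw
  have h2 := LTDaux.CE hR e hee hii hD (mul_zero e) (zero_mul e)
    (mul_zero e) (zero_mul e) hw
  have h3 := LTDaux.C3 hR e hee hi hD ha.1 ha.2 hd.1 hd.2
  have arg1 : e + (b + c + (a + d - e)) = a + b + c + d := by abel
  have arg2 : e + (0 + 0 + (a + d - e)) = a + d := by abel
  rw [arg1] at h1
  rw [arg2, LTDaux.D_zero hD] at h2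
  refine ⟨_, LTDaux.center_add (LTDaux.center_sub h1 h2) h3, ?_⟩
  abel
end
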